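/- arXiv:1906.03571 — 9 statements merged into one kernel-verified Lean document; each statement's English description precedes it below -/
import Mathlib

section
/- Let 0 < k ≤ 1 and m ≥ 1 be real numbers. Then for all real t with 0 ≤ t ≤ k, we have (1+t)^m ≥ 1 + ((1+k)^m - 1)/k^m · t^m. -/
/-!
Multiplying by `k ^ m` and writing `k ^ m (1 + t) ^ m = (k + k t) ^ m`,
`t ^ m (1 + k) ^ m = (t + k t) ^ m`, the claim becomes
`(t + k t) ^ m - t ^ m ≤ (k + k t) ^ m - k ^ m`: the increments of the convex function `x ↦ x ^ m`
over a step of fixed length `k t` grow with the starting point, and `t ≤ k`.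
-/

theorem ConvexOn.map_add_sub_map_le {𝕜 β : Type*} [Field 𝕜] [LinearOrder 𝕜]
    [IsStrictOrderedRing 𝕜] [AddCommGroup β] [PartialOrder β] [IsOrderedAddMonoid β]
    [Module 𝕜 β] {s : Set 𝕜} {f : 𝕜 → β} (hf : ConvexOn 𝕜 s f) {x y d : 𝕜}
    (hx : x ∈ s) (hyd : y + d ∈ s) (hxy : x ≤ y) (hd : 0 ≤ d) :
    f (x + d) - f x ≤ f (y + d) - f y := by
  rcases hd.eq_or_lt with rfl | hd_pos
  · simp
  have hL : 0 < y + d - x := by linarith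
  set a := (y - x) / (y + d - x)
  set b := d / (y + d - x)
  have ha : 0 ≤ a := div_nonneg (by linarith) hL.le
  have hb : 0 ≤ b := div_nonneg hd hL.le
  have hab : a + b = 1 := by rw [← add_div, div_eq_one_iff_eq hL.ne']; ring
  have hba : b + a = 1 := by rw [add_comm, hab]
  -- `x + d` and `y` are the two convex combinations of `x` and `y + d` with swapped weights
  have h₁ : f (x + d) ≤ a • f x + b • f (y + d) := by
    convert hf.2 hx hyd ha hb hab using 2
    simp only [smul_eq_mul, a, b]; field_simp; ring
  have h₂ : f y ≤ b • f x + a • f (y + d) := by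
    convert hf.2 hx hyd hb ha hba using 2
    simp only [smul_eq_mul, a, b]; field_simp; ring
  rw [sub_le_sub_iff]
  calc f (x + d) + f y ≤ (a • f x + b • f (y + d)) + (b • f x + a • f (y + d)) :=
        add_le_add h₁ h₂
    _ = f (y + d) + f x := by linear_combination (norm := module) hab • (f x + f (y + d))

open Real

theorem Real.rpow_add_sub_rpow_le {m : ℝ} (hm : 1 ≤ m) {x y d : ℝ} (hx : 0 ≤ x) (hxy : x ≤ y)
    (hd : 0 ≤ d) : (x + d) ^ m - x ^ m ≤ (y + d) ^ m - y ^ m :=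
  (convexOn_rpow hm).map_add_sub_map_le hx (by simp only [Set.mem_Ici]; linarith) hxy hd

theorem stmt_0_general (k m t : ℝ) (hk0 : 0 < k) (hm : 1 ≤ m)
    (ht0 : 0 ≤ t) (htk : t ≤ k) :
    (1 + t) ^ m ≥ 1 + ((1 + k) ^ m - 1) / k ^ m * t ^ m := by
  have key := rpow_add_sub_rpow_le hm ht0 htk (mul_nonneg hk0.le ht0)
  have e₁ : (t + k * t) ^ m = t ^ m * (1 + k) ^ m := by
    rw [← mul_rpow ht0 (by linarith)]; ring_nf
  have e₂ : (k + k * t) ^ m = k ^ m * (1 + t) ^ m := by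
    rw [← mul_rpow hk0.le (by linarith)]; ring_nf
  rw [e₁, e₂] at key
  have hkm : 0 < k ^ m := rpow_pos_of_pos hk0 m
  rw [ge_iff_le, ← le_sub_iff_add_le', div_mul_eq_mul_div, div_le_iff₀ hkm]
  linarith

theorem stmt_0 (k m t : ℝ) (hk0 : 0 < k) (hk1 : k ≤ 1) (hm : 1 ≤ m)
    (ht0 : 0 ≤ t) (htk : t ≤ k) :
    (1 + t) ^ m ≥ 1 + ((1 + k) ^ m - 1) / k ^ m * t ^ m :=
  stmt_0_general k m t hk0 hm ht0 htk
end

section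
/- Let 0 < k ≤ 1 and 0 ≤ n ≤ 1 be real numbers. Then for all real t with 0 ≤ t ≤ k, we have (1+t)^n ≤ 1 + ((1+k)^n - 1)/k^n · t^n. -/
/-!
Multiplying by `k ^ n` and using `(1 + t) k = k + t k` and `(1 + k) t = t + t k`, the inequality
says that the increment of the concave function `x ↦ x ^ n` over an interval of length `t k` is
larger at `t` than at `k ≥ t`.
-/

open Real

theorem ConcaveOn.map_add_sub_map_le_of_le {𝕜 : Type*} [Field 𝕜] [LinearOrder 𝕜]
    [IsStrictOrderedRing 𝕜] {s : Set 𝕜} {f : 𝕜 → 𝕜} (hf : ConcaveOn 𝕜 s f) {a b c : 𝕜}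
    (ha : a ∈ s) (hbc : b + c ∈ s) (hab : a ≤ b) (hc : 0 ≤ c) :
    f (b + c) - f b ≤ f (a + c) - f a := by
  rcases hc.eq_or_lt with rfl | hc
  · simp
  -- `b` and `a + c` are convex combinations of `a` and `b + c` with swapped weights `μ`, `θ`.
  have hD : 0 < b + c - a := by linarith
  set θ := (b - a) / (b + c - a)
  set μ := c / (b + c - a)
  have hθ : 0 ≤ θ := div_nonneg (by linarith) hD.le
  have hμ : 0 ≤ μ := div_nonneg hc.le hD.le
  have hsum : μ + θ = 1 := by simp only [μ, θ]; field_simp; ring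
  have hb : μ • a + θ • (b + c) = b := by simp only [smul_eq_mul, μ, θ]; field_simp; ring
  have hac : θ • a + μ • (b + c) = a + c := by simp only [smul_eq_mul, μ, θ]; field_simp; ring
  have jensen_b := hf.2 ha hbc hμ hθ hsum
  have jensen_ac := hf.2 ha hbc hθ hμ (by rw [add_comm, hsum])
  rw [hb] at jensen_b
  rw [hac] at jensen_ac
  simp only [smul_eq_mul] at jensen_b jensen_ac
  linear_combination jensen_b + jensen_ac - (f a + f (b + c)) * hsum

theorem stmt_1_general (k n t : ℝ) (hk0 : 0 < k) (hn0 : 0 ≤ n) (hn1 : n ≤ 1)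
    (ht0 : 0 ≤ t) (htk : t ≤ k) :
    (1 + t) ^ n ≤ 1 + ((1 + k) ^ n - 1) / k ^ n * t ^ n := by
  have increment := (concaveOn_rpow hn0 hn1).map_add_sub_map_le_of_le
    (Set.mem_Ici.2 ht0) (Set.mem_Ici.2 (by positivity : 0 ≤ k + t * k)) htk (by positivity)
  have hbc : k + t * k = (1 + t) * k := by ring
  have hac : t + t * k = (1 + k) * t := by ring
  rw [hbc, hac, mul_rpow (by linarith) hk0.le, mul_rpow (by linarith) ht0] at increment
  rw [div_mul_eq_mul_div, ← sub_le_iff_le_add', le_div_iff₀ (rpow_pos_of_pos hk0 n)]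
  linarith

theorem stmt_1 (k n t : ℝ) (hk0 : 0 < k) (hk1 : k ≤ 1) (hn0 : 0 ≤ n) (hn1 : n ≤ 1)
    (ht0 : 0 ≤ t) (htk : t ≤ k) :
    (1 + t) ^ n ≤ 1 + ((1 + k) ^ n - 1) / k ^ n * t ^ n :=
  stmt_1_general k n t hk0 hn0 hn1 ht0 htk
end

section
/- Let 0 < k ≤ 1 and β ≥ 2 be real numbers, and let a, b, c ≥ 0 be nonnegative reals satisfying c² ≥ a² + b² and b² ≤ k·a². Then c^β ≥ a^β + ((1+k)^{β/2} - 1)/k^{β/2} · b^β. -/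
/-!
Put `μ = β / 2 ≥ 1`, `x = a²`, `y = b²`, so that `t ↦ t ^ μ` is convex on `[0, ∞)` and its increments
`t ↦ (t + d) ^ μ - t ^ μ` are monotone. Comparing the increments of length `k y` at `y ≤ k x` gives
`((1 + k) ^ μ - 1) y ^ μ ≤ k ^ μ ((x + y) ^ μ - x ^ μ)`, and `c ^ β ≥ (x + y) ^ μ` finishes the proof.
-/

open Real

theorem ConvexOn.map_add_sub_map_le_of_le {s : Set ℝ} {f : ℝ → ℝ} (hf : ConvexOn ℝ s f)
    {x y d : ℝ} (hx : x ∈ s) (hyd : y + d ∈ s) (hxy : x ≤ y) (hd : 0 ≤ d) :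
    f (x + d) - f x ≤ f (y + d) - f y := by
  rcases hd.eq_or_lt with rfl | hd
  · simp
  have hxd : x + d ∈ s := hf.1.ordConnected.out hx hyd ⟨by linarith, by linarith⟩
  have hy : y ∈ s := hf.1.ordConnected.out hx hyd ⟨hxy, by linarith⟩
  -- slope on `[x, x + d]` ≤ slope on `[x, y + d]` ≤ slope on `[y, y + d]`
  have h₁ := hf.secant_mono hx hxd hyd (by linarith) (by linarith) (by linarith)
  have h₂ := hf.secant_mono hyd hx hy (by linarith) (by linarith) hxy
  rw [add_sub_cancel_left] at h₁
  rw [← neg_sub (f (y + d)), ← neg_sub (y + d) x, ← neg_sub (f (y + d)), ← neg_sub (y + d),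
    neg_div_neg_eq, neg_div_neg_eq, add_sub_cancel_left] at h₂
  exact (div_le_div_iff_of_pos_right hd).1 (h₁.trans h₂)

theorem rpow_add_sub_rpow_le_of_le {p x y d : ℝ} (hp : 1 ≤ p) (hx : 0 ≤ x) (hxy : x ≤ y)
    (hd : 0 ≤ d) : (x + d) ^ p - x ^ p ≤ (y + d) ^ p - y ^ p :=
  (convexOn_rpow hp).map_add_sub_map_le_of_le (f := fun t => t ^ p) hx
    (show (0 : ℝ) ≤ y + d by linarith) hxy hd

theorem one_add_rpow_sub_one_mul_rpow_le {μ k x y : ℝ} (hμ : 1 ≤ μ) (hk : 0 ≤ k) (hx : 0 ≤ x)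
    (hy : 0 ≤ y) (hyx : y ≤ k * x) :
    ((1 + k) ^ μ - 1) * y ^ μ ≤ k ^ μ * ((x + y) ^ μ - x ^ μ) := by
  have key := rpow_add_sub_rpow_le_of_le hμ hy hyx (mul_nonneg hk hy)
  rw [sub_mul, one_mul]
  rwa [← mul_add, mul_rpow hk (by positivity), mul_rpow hk hx, ← mul_sub,
    show y + k * y = (1 + k) * y by ring, mul_rpow (by positivity) hy] at key

theorem rpow_eq_sq_rpow_half {x : ℝ} (hx : 0 ≤ x) (β : ℝ) : x ^ β = (x ^ 2) ^ (β / 2) := by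
  rw [← rpow_natCast, ← rpow_mul hx]
  ring_nf

theorem stmt_4_general (k β a b c : ℝ) (hk0 : 0 < k) (hβ : 2 ≤ β)
    (ha : 0 ≤ a) (hb : 0 ≤ b) (hc : 0 ≤ c)
    (hmono : c ^ 2 ≥ a ^ 2 + b ^ 2) (hcond : b ^ 2 ≤ k * a ^ 2) :
    c ^ β ≥ a ^ β + ((1 + k) ^ (β / 2) - 1) / k ^ (β / 2) * b ^ β := by
  have hμ : 1 ≤ β / 2 := by linarith
  have hkμ : 0 < k ^ (β / 2) := rpow_pos_of_pos hk0 _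
  have hc' : (a ^ 2 + b ^ 2) ^ (β / 2) ≤ c ^ β := by
    rw [rpow_eq_sq_rpow_half hc]
    exact rpow_le_rpow (by positivity) hmono (by linarith)
  have key := one_add_rpow_sub_one_mul_rpow_le hμ hk0.le (sq_nonneg a) (sq_nonneg b) hcond
  rw [rpow_eq_sq_rpow_half ha, rpow_eq_sq_rpow_half hb, div_mul_eq_mul_div, ge_iff_le,
    ← le_sub_iff_add_le', div_le_iff₀' hkμ]
  linarith [mul_le_mul_of_nonneg_left (sub_le_sub_right hc' ((a ^ 2) ^ (β / 2))) hkμ.le]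

theorem stmt_4 (k β a b c : ℝ) (hk0 : 0 < k) (hk1 : k ≤ 1) (hβ : 2 ≤ β)
    (ha : 0 ≤ a) (hb : 0 ≤ b) (hc : 0 ≤ c)
    (hmono : c ^ 2 ≥ a ^ 2 + b ^ 2) (hcond : b ^ 2 ≤ k * a ^ 2) :
    c ^ β ≥ a ^ β + ((1 + k) ^ (β / 2) - 1) / k ^ (β / 2) * b ^ β :=
  stmt_4_general k β a b c hk0 hβ ha hb hc hmono hcond
end

section
/- Let 0 < k ≤ 1 and β ≥ 2 be real numbers. Let c ≥ 0 and a₁,…,a_{N-1} ≥ 0 be nonnegative reals such that c² ≥ a₁² + a₂² + ⋯ + a_{N-1}² and, setting c_i² = a_{i+1}² + ⋯ + a_{N-1}², assume k·a_i² ≥ c_i² for all i = 1,…,N-2. Then, with h = ((1+k)^{β/2} - 1)/k^{β/2}, we have c^β ≥ a₁^β + h·a₂^β + h²·a₃^β + ⋯ + h^{N-2}·a_{N-1}^β. -/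
/-!
Put `x_i = a_i²` and `s = β / 2 ≥ 1`. The hypotheses say that `k x_i` bounds the sum of the later
terms, and for `0 ≤ Y ≤ k X` convexity of `t ↦ tˢ` gives
`Xˢ + h Yˢ ≤ (X + Y)ˢ`. Peeling off the first term and inducting yields
`∑ hⁱ x_iˢ ≤ (∑ x_i)ˢ ≤ (c²)ˢ = c^β`.
-/

open Finset

/-- The paper's `h` is `monogamyWeight k (β / 2)`. -/
noncomputable def monogamyWeight (k s : ℝ) : ℝ := ((1 + k) ^ s - 1) / k ^ s

lemma monogamyWeight_nonneg {k s : ℝ} (hk : 0 ≤ k) (hs : 0 ≤ s) : 0 ≤ monogamyWeight k s :=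
  div_nonneg (sub_nonneg.2 (Real.one_le_rpow (by linarith) hs)) (Real.rpow_nonneg hk s)

/-- Two-point Karamata: `(a, d)` majorizes `(b, c)`. -/
theorem ConvexOn.map_add_map_le_of_add_eq {S : Set ℝ} {f : ℝ → ℝ} (hf : ConvexOn ℝ S f)
    {a b c d : ℝ} (ha : a ∈ S) (hd : d ∈ S) (hdb : d ≤ b) (hba : b ≤ a)
    (hsum : b + c = a + d) : f b + f c ≤ f a + f d := by
  rcases (hdb.trans hba).eq_or_lt with had | had
  · obtain rfl : b = a := le_antisymm hba (had ▸ hdb)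
    obtain rfl : c = b := by linarith
    rw [had]
  set t := (b - d) / (a - d)
  have had' : 0 < a - d := sub_pos.2 had
  have ht0 : 0 ≤ t := div_nonneg (sub_nonneg.2 hdb) had'.le
  have ht1 : 0 ≤ 1 - t := by
    rw [sub_nonneg, div_le_one had']
    linarith
  have htad : t * (a - d) = b - d := div_mul_cancel₀ _ had'.ne'
  have hb : t * a + (1 - t) * d = b := by linear_combination htad
  have hc : (1 - t) * a + t * d = c := by linear_combination -htad - hsum
  have hfb := hf.2 ha hd ht0 ht1 (add_sub_cancel t 1)
  have hfc := hf.2 ha hd ht1 ht0 (sub_add_cancel 1 t)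
  simp only [smul_eq_mul, hb, hc] at hfb hfc
  linarith

/-- Apply Karamata to `x ↦ x^s` at `(k(X+Y), Y)` majorizing `((1+k)Y, kX)`. -/
theorem rpow_add_monogamyWeight_mul_rpow_le {k s X Y : ℝ} (hk : 0 < k) (hs : 1 ≤ s)
    (hY : 0 ≤ Y) (hYX : Y ≤ k * X) :
    X ^ s + monogamyWeight k s * Y ^ s ≤ (X + Y) ^ s := by
  have hX : 0 ≤ X := le_of_mul_le_mul_left (by linarith : k * 0 ≤ k * X) hk
  have hkaramata := (convexOn_rpow hs).map_add_map_le_of_add_eq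
    (a := k * (X + Y)) (b := (1 + k) * Y) (c := k * X) (d := Y)
    (Set.mem_Ici.2 (mul_nonneg hk.le (add_nonneg hX hY))) hY (by nlinarith) (by nlinarith)
    (by ring)
  rw [Real.mul_rpow (by positivity) hY, Real.mul_rpow hk.le hX,
    Real.mul_rpow hk.le (add_nonneg hX hY)] at hkaramata
  have hks : 0 < k ^ s := Real.rpow_pos_of_pos hk s
  refine le_of_mul_le_mul_left ?_ hks
  rw [mul_add, monogamyWeight, ← mul_assoc, mul_div_cancel₀ _ hks.ne']
  linarith

theorem sum_monogamyWeight_pow_mul_rpow_le {k s : ℝ} (hk : 0 < k) (hs : 1 ≤ s)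
    (n : ℕ) (x : ℕ → ℝ) (hx : ∀ i < n, 0 ≤ x i)
    (htail : ∀ i < n, ∑ j ∈ Ico (i + 1) n, x j ≤ k * x i) :
    ∑ i ∈ range n, monogamyWeight k s ^ i * x i ^ s ≤ (∑ i ∈ range n, x i) ^ s := by
  induction n generalizing x with
  | zero => simp [Real.zero_rpow (by linarith : s ≠ 0)]
  | succ n ih =>
    set w := monogamyWeight k s
    have hrest := ih (fun i => x (i + 1)) (fun i hi => hx (i + 1) (by omega)) fun i hi => by
      simpa only [sum_Ico_add'] using htail (i + 1) (by omega)
    have hhead : ∑ i ∈ range n, x (i + 1) ≤ k * x 0 := by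
      simpa only [range_eq_Ico, sum_Ico_add'] using htail 0 (by omega)
    calc ∑ i ∈ range (n + 1), w ^ i * x i ^ s
        = x 0 ^ s + w * ∑ i ∈ range n, w ^ i * x (i + 1) ^ s := by
          rw [sum_range_succ', mul_sum, pow_zero, one_mul, add_comm]
          exact congrArg _ (sum_congr rfl fun i _ => by ring)
      _ ≤ x 0 ^ s + w * (∑ i ∈ range n, x (i + 1)) ^ s := by
          gcongr
          exact monogamyWeight_nonneg hk.le (by linarith)
      _ ≤ (x 0 + ∑ i ∈ range n, x (i + 1)) ^ s :=
          rpow_add_monogamyWeight_mul_rpow_le hk hs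
            (sum_nonneg fun i hi => hx (i + 1) (by simp at hi; omega)) hhead
      _ = (∑ i ∈ range (n + 1), x i) ^ s := by rw [sum_range_succ', add_comm]

lemma sum_Ico_comp_succ_eq_sum_Icc {M : Type*} [AddCommMonoid M] (f : ℕ → M) (m n : ℕ) :
    ∑ i ∈ Ico m n, f (i + 1) = ∑ i ∈ Icc (m + 1) n, f i := by
  rw [sum_Ico_add', Finset.Ico_add_one_right_eq_Icc]

lemma sum_range_comp_succ_eq_sum_Icc {M : Type*} [AddCommMonoid M] (f : ℕ → M) (n : ℕ) :
    ∑ i ∈ range n, f (i + 1) = ∑ i ∈ Icc 1 n, f i := by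
  rw [range_eq_Ico, sum_Ico_comp_succ_eq_sum_Icc]

lemma Real.sq_rpow_half {x : ℝ} (hx : 0 ≤ x) (y : ℝ) : (x ^ 2) ^ (y / 2) = x ^ y := by
  rw [← Real.rpow_natCast_mul hx]
  congr 1
  push_cast
  ring

theorem stmt_5_general (k β : ℝ) (hk0 : 0 < k) (hβ : 2 ≤ β)
    (N : ℕ) (c : ℝ) (a : ℕ → ℝ)
    (hc : 0 ≤ c) (ha : ∀ i ∈ Finset.Icc 1 (N - 1), 0 ≤ a i)
    (hmono : c ^ 2 ≥ ∑ i ∈ Finset.Icc 1 (N - 1), (a i) ^ 2)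
    (hcond : ∀ i ∈ Finset.Icc 1 (N - 2),
      k * (a i) ^ 2 ≥ ∑ j ∈ Finset.Icc (i + 1) (N - 1), (a j) ^ 2) :
    c ^ β ≥ ∑ i ∈ Finset.Icc 1 (N - 1),
      (((1 + k) ^ (β / 2) - 1) / k ^ (β / 2)) ^ (i - 1) * (a i) ^ β := by
  have hsquares := sum_monogamyWeight_pow_mul_rpow_le hk0 (by linarith : 1 ≤ β / 2) (N - 1)
    (fun i => a (i + 1) ^ 2) (fun i _ => sq_nonneg _) fun i hi => by
      rw [sum_Ico_comp_succ_eq_sum_Icc (fun j => a j ^ 2)]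
      by_cases hi' : i + 1 ≤ N - 2
      · exact hcond (i + 1) (mem_Icc.2 ⟨by omega, hi'⟩)
      · rw [Icc_eq_empty (by omega), sum_empty]
        positivity
  rw [sum_range_comp_succ_eq_sum_Icc (fun i => a i ^ 2)] at hsquares
  calc ∑ i ∈ Icc 1 (N - 1), monogamyWeight k (β / 2) ^ (i - 1) * a i ^ β
      = ∑ i ∈ range (N - 1), monogamyWeight k (β / 2) ^ i * (a (i + 1) ^ 2) ^ (β / 2) := by
        rw [← sum_range_comp_succ_eq_sum_Icc]
        refine sum_congr rfl fun i hi => ?_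
        rw [Nat.add_sub_cancel, Real.sq_rpow_half (ha (i + 1) (by simp at hi ⊢; omega))]
    _ ≤ (∑ i ∈ Icc 1 (N - 1), a i ^ 2) ^ (β / 2) := hsquares
    _ ≤ (c ^ 2) ^ (β / 2) := Real.rpow_le_rpow (sum_nonneg fun i _ => sq_nonneg _) hmono (by linarith)
    _ = c ^ β := Real.sq_rpow_half hc β

theorem stmt_5 (k β : ℝ) (hk0 : 0 < k) (hk1 : k ≤ 1) (hβ : 2 ≤ β)
    (N : ℕ) (hN : 2 ≤ N) (c : ℝ) (a : ℕ → ℝ)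
    (hc : 0 ≤ c) (ha : ∀ i ∈ Finset.Icc 1 (N - 1), 0 ≤ a i)
    (hmono : c ^ 2 ≥ ∑ i ∈ Finset.Icc 1 (N - 1), (a i) ^ 2)
    (hcond : ∀ i ∈ Finset.Icc 1 (N - 2),
      k * (a i) ^ 2 ≥ ∑ j ∈ Finset.Icc (i + 1) (N - 1), (a j) ^ 2) :
    c ^ β ≥ ∑ i ∈ Finset.Icc 1 (N - 1),
      (((1 + k) ^ (β / 2) - 1) / k ^ (β / 2)) ^ (i - 1) * (a i) ^ β :=
  stmt_5_general k β hk0 hβ N c a hc ha hmono hcond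
end

section
/- Let f : [0,∞) → [0,∞) satisfy the superadditivity property f(x² + y²)^{√2} ≥ f(x²)^{√2} + f(y²)^{√2} for all x, y ≥ 0. Let 0 < k ≤ 1, β ≥ √2 and set t = β/√2. If k·f(x²)^{√2} ≥ f(y²)^{√2}, then f(x² + y²)^β ≥ f(x²)^β + ((1+k)^t - 1)/k^t · f(y²)^β. -/
/-!
Write `a = f(x²)^√2`, `b = f(y²)^√2` and `t = β/√2 ≥ 1`, so that `f(·)^β = (f(·)^√2)^t` and,
by the hypothesis on `f`, it suffices to show `(a + b)^t ≥ a^t + ((1+k)^t - 1)/k^t · b^t`.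
Since `s ↦ s^t` is convex, its increments `(s + b)^t - s^t` grow with `s`; comparing them at
`s = b/k ≤ a` and `s = a` gives exactly this, because `(b/k + b)^t - (b/k)^t = ((1+k)^t - 1) (b/k)^t`.
-/

open Real

theorem ConvexOn.map_add_sub_le_map_add_sub {𝕜 : Type*} [Field 𝕜] [LinearOrder 𝕜] [IsStrictOrderedRing 𝕜]
    {s : Set 𝕜} {f : 𝕜 → 𝕜} (hf : ConvexOn 𝕜 s f) {u v c : 𝕜} (hu : u ∈ s) (hvc : v + c ∈ s)
    (huv : u ≤ v) (hc : 0 ≤ c) : f (u + c) - f u ≤ f (v + c) - f v := by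
  rcases hc.eq_or_lt with rfl | hc
  · simp
  have hD : 0 < v + c - u := by linarith
  -- `u + c` and `v` are the convex combinations of `u` and `v + c` with swapped weights
  set l := c / (v + c - u)
  have hl0 : 0 ≤ l := by positivity
  have hl1 : l ≤ 1 := (div_le_one hD).mpr (by linarith)
  have h₁ := hf.2 hu hvc (sub_nonneg.mpr hl1) hl0 (sub_add_cancel 1 l)
  have h₂ := hf.2 hu hvc hl0 (sub_nonneg.mpr hl1) (add_sub_cancel l 1)
  have e₁ : (1 - l) • u + l • (v + c) = u + c := by simp only [l, smul_eq_mul]; field_simp; ring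
  have e₂ : l • u + (1 - l) • (v + c) = v := by simp only [l, smul_eq_mul]; field_simp; ring
  rw [e₁] at h₁
  rw [e₂] at h₂
  simp only [smul_eq_mul] at h₁ h₂
  linarith

theorem Real.rpow_add_ge_of_le_mul {t k a b : ℝ} (ht : 1 ≤ t) (hk : 0 < k) (hb : 0 ≤ b)
    (hba : b ≤ k * a) : a ^ t + ((1 + k) ^ t - 1) / k ^ t * b ^ t ≤ (a + b) ^ t := by
  have hbk : 0 ≤ b / k := by positivity
  have hbka : b / k ≤ a := (div_le_iff₀' hk).mpr hba
  have hincr := (convexOn_rpow ht).map_add_sub_le_map_add_sub hbk (Set.mem_Ici.mpr (by linarith)) hbka hb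
  have hbase : (b / k + b) ^ t - (b / k) ^ t = ((1 + k) ^ t - 1) / k ^ t * b ^ t := by
    have hkt : 0 < k ^ t := rpow_pos_of_pos hk t
    rw [show b / k + b = b / k * (1 + k) by field_simp, mul_rpow hbk (by linarith),
      div_rpow hb hk.le]
    field_simp
  linarith

theorem stmt_9_general (f : ℝ → ℝ) (hf : ∀ x : ℝ, 0 ≤ x → 0 ≤ f x)
    (hsuper : ∀ x y : ℝ, 0 ≤ x → 0 ≤ y →
      f (x ^ 2 + y ^ 2) ^ (Real.sqrt 2) ≥ f (x ^ 2) ^ (Real.sqrt 2) + f (y ^ 2) ^ (Real.sqrt 2))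
    (k β : ℝ) (hk0 : 0 < k) (hβ : Real.sqrt 2 ≤ β)
    (x y : ℝ) (hx : 0 ≤ x) (hy : 0 ≤ y)
    (hcond : k * f (x ^ 2) ^ (Real.sqrt 2) ≥ f (y ^ 2) ^ (Real.sqrt 2)) :
    f (x ^ 2 + y ^ 2) ^ β ≥
      f (x ^ 2) ^ β +
        ((1 + k) ^ (β / Real.sqrt 2) - 1) / k ^ (β / Real.sqrt 2) * f (y ^ 2) ^ β := by
  have hsqrt2 : 0 < √2 := by positivity
  have hfpow : ∀ z, 0 ≤ z → 0 ≤ f z ^ √2 := fun z hz => rpow_nonneg (hf z hz) _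
  set t := β / √2
  have ht : 1 ≤ t := (one_le_div hsqrt2).mpr hβ
  have hpow : ∀ z, 0 ≤ z → f z ^ β = (f z ^ √2) ^ t := fun z hz => by
    rw [← rpow_mul (hf z hz), mul_div_cancel₀ β hsqrt2.ne']
  rw [hpow _ (by positivity), hpow _ (by positivity), hpow _ (by positivity)]
  calc (f (x ^ 2) ^ √2) ^ t + ((1 + k) ^ t - 1) / k ^ t * (f (y ^ 2) ^ √2) ^ t
      ≤ (f (x ^ 2) ^ √2 + f (y ^ 2) ^ √2) ^ t :=
        rpow_add_ge_of_le_mul ht hk0 (hfpow _ (by positivity)) hcond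
    _ ≤ (f (x ^ 2 + y ^ 2) ^ √2) ^ t :=
        rpow_le_rpow (add_nonneg (hfpow _ (by positivity)) (hfpow _ (by positivity)))
          (hsuper x y hx hy) (by linarith)

theorem stmt_9 (f : ℝ → ℝ) (hf : ∀ x : ℝ, 0 ≤ x → 0 ≤ f x)
    (hsuper : ∀ x y : ℝ, 0 ≤ x → 0 ≤ y →
      f (x ^ 2 + y ^ 2) ^ (Real.sqrt 2) ≥ f (x ^ 2) ^ (Real.sqrt 2) + f (y ^ 2) ^ (Real.sqrt 2))
    (k β : ℝ) (hk0 : 0 < k) (hk1 : k ≤ 1) (hβ : Real.sqrt 2 ≤ β)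
    (x y : ℝ) (hx : 0 ≤ x) (hy : 0 ≤ y)
    (hcond : k * f (x ^ 2) ^ (Real.sqrt 2) ≥ f (y ^ 2) ^ (Real.sqrt 2)) :
    f (x ^ 2 + y ^ 2) ^ β ≥
      f (x ^ 2) ^ β +
        ((1 + k) ^ (β / Real.sqrt 2) - 1) / k ^ (β / Real.sqrt 2) * f (y ^ 2) ^ β :=
  stmt_9_general f hf hsuper k β hk0 hβ x y hx hy hcond
end

section
/- Let 0 < k ≤ 1 and β ≥ √2 be real numbers with t = β/√2. Let e, e₁,…,e_{N-1} ≥ 0 satisfy e^{√2} ≥ e₁^{√2} + ⋯ + e_{N-1}^{√2}, and setting d_i^{√2} = e_{i+1}^{√2} + ⋯ + e_{N-1}^{√2}, assume k·e_i^{√2} ≥ d_i^{√2} for all i = 1,…,N-2. Then, with h = ((1+k)^t - 1)/k^t, we have e^β ≥ e₁^β + h·e₂^β + h²·e₃^β + ⋯ + h^{N-2}·e_{N-1}^β. -/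
/-!
Put `x i = a i ^ √2` and `t = β / √2 ≥ 1`; since `e ^ β = (e ^ √2) ^ t ≥ (∑ x i) ^ t`, it suffices
to show `∑ h ^ (i - 1) * x i ^ t ≤ (∑ x i) ^ t`. Peeling off the first term, this follows by
induction from the two-term inequality `x ^ t + h * y ^ t ≤ (x + y) ^ t` for `0 ≤ y ≤ k x`.
By homogeneity that inequality says `φ (1 / k) ≤ φ (x / y)` for `φ u = (u + 1) ^ t - u ^ t`,
and `φ` is monotone because `u ↦ u ^ t` is convex.
-/

open Finset Real

theorem ConvexOn.map_add_sub_map_le_map_add_sub_map {𝕜 : Type*} [Field 𝕜] [LinearOrder 𝕜]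
    [IsStrictOrderedRing 𝕜] {s : Set 𝕜} {f : 𝕜 → 𝕜} (hf : ConvexOn 𝕜 s f) {x y c : 𝕜}
    (hx : x ∈ s) (hyc : y + c ∈ s) (hxy : x ≤ y) (hc : 0 < c) :
    f (x + c) - f x ≤ f (y + c) - f y := by
  have hxc : x + c ∈ s := hf.1.ordConnected.out hx hyc ⟨by linarith, by linarith⟩
  have hy : y ∈ s := hf.1.ordConnected.out hx hyc ⟨hxy, by linarith⟩
  have h₁ := hf.secant_mono hx hxc hyc (by linarith) (by linarith) (by linarith)
  have h₂ := hf.secant_mono hyc hx hy (by linarith) (by linarith) hxy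
  have key : (f (x + c) - f x) / c ≤ (f (y + c) - f y) / c :=
    calc (f (x + c) - f x) / c = (f (x + c) - f x) / (x + c - x) := by rw [add_sub_cancel_left]
      _ ≤ (f (y + c) - f x) / (y + c - x) := h₁
      _ = (f x - f (y + c)) / (x - (y + c)) := by
        rw [← neg_sub (f x), ← neg_sub x, neg_div_neg_eq]
      _ ≤ (f y - f (y + c)) / (y - (y + c)) := h₂
      _ = (f (y + c) - f y) / c := by rw [sub_add_cancel_left, div_neg, ← neg_div, neg_sub]
  exact (div_le_div_iff_of_pos_right hc).1 key

theorem rpow_add_sub_rpow_eq_mul {t u c : ℝ} (hu : 0 ≤ u) (hc : 0 < c) :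
    (u + c) ^ t - u ^ t = c ^ t * ((u / c + 1) ^ t - (u / c) ^ t) := by
  rw [mul_sub, ← mul_rpow hc.le (by positivity), ← mul_rpow hc.le (by positivity),
    mul_div_cancel₀ u hc.ne', mul_add_one, mul_div_cancel₀ u hc.ne']

theorem rpow_add_mul_rpow_le_rpow_add {t k x y : ℝ} (ht : 1 ≤ t) (hk : 0 < k)
    (hy : 0 ≤ y) (hyx : y ≤ k * x) :
    x ^ t + ((1 + k) ^ t - 1) / k ^ t * y ^ t ≤ (x + y) ^ t := by
  rcases hy.eq_or_lt with rfl | hy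
  · simp [zero_rpow (by linarith : t ≠ 0)]
  have hx : 0 < x := pos_of_mul_pos_right (hy.trans_le hyx) hk.le
  have hmono : (1 / k + 1) ^ t - (1 / k) ^ t ≤ (x / y + 1) ^ t - (x / y) ^ t :=
    (convexOn_rpow ht).map_add_sub_map_le_map_add_sub_map (by simp [hk.le])
      (by simp; positivity) (by rw [div_le_div_iff₀ hk hy]; linarith) one_pos
  have hgain : ((1 + k) ^ t - 1) / k ^ t = (1 / k + 1) ^ t - (1 / k) ^ t := by
    have := rpow_add_sub_rpow_eq_mul (t := t) zero_le_one hk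
    rw [one_rpow] at this
    rw [div_eq_iff (rpow_pos_of_pos hk t).ne', this, mul_comm]
  have : ((1 + k) ^ t - 1) / k ^ t * y ^ t ≤ (x + y) ^ t - x ^ t := by
    rw [rpow_add_sub_rpow_eq_mul hx.le hy, hgain, mul_comm]
    exact mul_le_mul_of_nonneg_left hmono (rpow_nonneg hy.le t)
  linarith

theorem sum_pow_mul_rpow_le_rpow_sum {t k : ℝ} (ht : 1 ≤ t) (hk : 0 < k) {x : ℕ → ℝ} {m n : ℕ}
    (hx : ∀ i ∈ Icc m n, 0 ≤ x i) (htail : ∀ i ∈ Ico m n, ∑ j ∈ Ioc i n, x j ≤ k * x i) :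
    ∑ i ∈ Icc m n, (((1 + k) ^ t - 1) / k ^ t) ^ (i - m) * x i ^ t ≤ (∑ i ∈ Icc m n, x i) ^ t := by
  set h := ((1 + k) ^ t - 1) / k ^ t
  have hh : 0 ≤ h := by
    have : 1 ≤ (1 + k) ^ t := one_le_rpow (by linarith) (by linarith)
    exact div_nonneg (by linarith) (rpow_nonneg hk.le t)
  rcases lt_or_ge n m with hnm | hmn
  · simp [Icc_eq_empty_of_lt hnm, zero_rpow (by linarith : t ≠ 0)]
  induction hmn using Nat.decreasingInduction with
  | self => simp
  | of_succ m hmn ih =>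
    have hsplit (g : ℕ → ℝ) : ∑ i ∈ Icc m n, g i = g m + ∑ i ∈ Icc (m + 1) n, g i := by
      rw [Icc_add_one_left_eq_Ioc, add_sum_Ioc_eq_sum_Icc hmn.le]
    have hrest := ih (fun i hi => hx i (Icc_subset_Icc_left m.le_succ hi))
      (fun i hi => htail i (Ico_subset_Ico_left m.le_succ hi))
    have hfirst : ∑ j ∈ Icc (m + 1) n, x j ≤ k * x m := by
      simpa [Icc_add_one_left_eq_Ioc] using htail m (left_mem_Ico.2 hmn)
    calc ∑ i ∈ Icc m n, h ^ (i - m) * x i ^ t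
        = x m ^ t + h * ∑ i ∈ Icc (m + 1) n, h ^ (i - (m + 1)) * x i ^ t := by
          rw [hsplit, Nat.sub_self, pow_zero, one_mul, mul_sum]
          refine congrArg _ (sum_congr rfl fun i hi => ?_)
          rw [← mul_assoc, ← pow_succ']
          congr 2
          grind
      _ ≤ x m ^ t + h * (∑ i ∈ Icc (m + 1) n, x i) ^ t := by gcongr
      _ ≤ (x m + ∑ i ∈ Icc (m + 1) n, x i) ^ t :=
          rpow_add_mul_rpow_le_rpow_add ht hk
            (sum_nonneg fun i hi => hx i (Icc_subset_Icc_left m.le_succ hi)) hfirst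
      _ = (∑ i ∈ Icc m n, x i) ^ t := by rw [hsplit]

theorem stmt_10_general (k β : ℝ) (hk0 : 0 < k) (hβ : Real.sqrt 2 ≤ β)
    (N : ℕ) (e : ℝ) (a : ℕ → ℝ)
    (he : 0 ≤ e) (ha : ∀ i ∈ Finset.Icc 1 (N - 1), 0 ≤ a i)
    (hmono : e ^ (Real.sqrt 2) ≥ ∑ i ∈ Finset.Icc 1 (N - 1), (a i) ^ (Real.sqrt 2))
    (hcond : ∀ i ∈ Finset.Icc 1 (N - 2),
      k * (a i) ^ (Real.sqrt 2) ≥ ∑ j ∈ Finset.Icc (i + 1) (N - 1), (a j) ^ (Real.sqrt 2)) :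
    e ^ β ≥ ∑ i ∈ Finset.Icc 1 (N - 1),
      (((1 + k) ^ (β / Real.sqrt 2) - 1) / k ^ (β / Real.sqrt 2)) ^ (i - 1) * (a i) ^ β := by
  have hsqrt2 : 0 < √2 := by positivity
  set t := β / √2
  set h := ((1 + k) ^ t - 1) / k ^ t
  have ht : 1 ≤ t := (one_le_div hsqrt2).2 hβ
  have hpow (y : ℝ) (hy : 0 ≤ y) : (y ^ √2) ^ t = y ^ β := by
    rw [← rpow_mul hy, mul_div_cancel₀ β hsqrt2.ne']
  have hx (i : ℕ) (hi : i ∈ Icc 1 (N - 1)) : 0 ≤ a i ^ √2 := rpow_nonneg (ha i hi) √2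
  have htail (i : ℕ) (hi : i ∈ Ico 1 (N - 1)) :
      ∑ j ∈ Ioc i (N - 1), a j ^ √2 ≤ k * a i ^ √2 := by
    rw [← Icc_add_one_left_eq_Ioc]
    exact hcond i (by grind)
  calc ∑ i ∈ Icc 1 (N - 1), h ^ (i - 1) * a i ^ β
      = ∑ i ∈ Icc 1 (N - 1), h ^ (i - 1) * (a i ^ √2) ^ t :=
        sum_congr rfl fun i hi => by rw [hpow _ (ha i hi)]
    _ ≤ (∑ i ∈ Icc 1 (N - 1), a i ^ √2) ^ t := sum_pow_mul_rpow_le_rpow_sum ht hk0 hx htail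
    _ ≤ (e ^ √2) ^ t := rpow_le_rpow (sum_nonneg hx) hmono (by linarith)
    _ = e ^ β := hpow e he

theorem stmt_10 (k β : ℝ) (hk0 : 0 < k) (hk1 : k ≤ 1) (hβ : Real.sqrt 2 ≤ β)
    (N : ℕ) (hN : 2 ≤ N) (e : ℝ) (a : ℕ → ℝ)
    (he : 0 ≤ e) (ha : ∀ i ∈ Finset.Icc 1 (N - 1), 0 ≤ a i)
    (hmono : e ^ (Real.sqrt 2) ≥ ∑ i ∈ Finset.Icc 1 (N - 1), (a i) ^ (Real.sqrt 2))
    (hcond : ∀ i ∈ Finset.Icc 1 (N - 2),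
      k * (a i) ^ (Real.sqrt 2) ≥ ∑ j ∈ Finset.Icc (i + 1) (N - 1), (a j) ^ (Real.sqrt 2)) :
    e ^ β ≥ ∑ i ∈ Finset.Icc 1 (N - 1),
      (((1 + k) ^ (β / Real.sqrt 2) - 1) / k ^ (β / Real.sqrt 2)) ^ (i - 1) * (a i) ^ β :=
  stmt_10_general k β hk0 hβ N e a he ha hmono hcond
end

section
/- Let 0 < k ≤ 1 and 0 ≤ β ≤ 1 be real numbers. Let e, e₁,…,e_{N-1} ≥ 0 satisfy e ≤ e₁ + ⋯ + e_{N-1}, and setting d_i = e_{i+1} + ⋯ + e_{N-1}, assume k·e_i ≥ d_i for all i = 1,…,N-2. Then, with h = ((1+k)^β - 1)/k^β, we have e^β ≤ e₁^β + h·e₂^β + h²·e₃^β + ⋯ + h^{N-2}·e_{N-1}^β. -/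
/-!
With `p = 1/β ≥ 1`, the map `u ↦ (1 + u ^ p) ^ (1/p)`, the `p`-norm of `(1, u)`, is convex by
Minkowski. Its chord between `u = 0` and `u = k ^ β`, read at `u = t ^ β`, gives
`(1 + t) ^ β ≤ 1 + h t ^ β` for `0 ≤ t ≤ k`, hence `(x + y) ^ β ≤ x ^ β + h y ^ β` whenever
`0 ≤ y ≤ k x`. Applying this to `a i` and the tail `d i = a (i+1) + ⋯` and recursing on the tail
produces one factor `h` per index.
-/

open Finset Real

lemma one_add_mul_rpow_rpow_inv_le {p v l : ℝ} (hp : 1 ≤ p) (hv : 0 ≤ v) (hl0 : 0 ≤ l)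
    (hl1 : l ≤ 1) :
    (1 + (l * v) ^ p) ^ p⁻¹ ≤ 1 - l + l * (1 + v ^ p) ^ p⁻¹ := by
  have hp0 : 0 < p := one_pos.trans_le hp
  have minkowski := Real.Lp_add_le_of_nonneg univ (f := ![1 - l, 0]) (g := ![l, l * v]) hp
    (by simp [Fin.forall_fin_two, hl1]) (by simp [Fin.forall_fin_two, hl0, mul_nonneg hl0 hv])
  simp only [Fin.sum_univ_two, Matrix.cons_val_zero, Matrix.cons_val_one, one_div] at minkowski
  rw [mul_rpow hl0 hv] at minkowski
  rwa [sub_add_cancel, zero_add, one_rpow, zero_rpow hp0.ne', add_zero,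
    rpow_rpow_inv (by linarith) hp0.ne', ← mul_one_add,
    mul_rpow (rpow_nonneg hl0 p) (by positivity), rpow_rpow_inv hl0 hp0.ne'] at minkowski

lemma one_add_rpow_sub_one_div_rpow_nonneg {k β : ℝ} (hk : 0 ≤ k) (hβ : 0 ≤ β) :
    0 ≤ ((1 + k) ^ β - 1) / k ^ β :=
  div_nonneg (sub_nonneg.2 (one_le_rpow (by linarith) hβ)) (rpow_nonneg hk β)

lemma one_add_rpow_le_chord {k β t : ℝ} (hk : 0 < k) (hβ0 : 0 ≤ β) (hβ1 : β ≤ 1)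
    (ht0 : 0 ≤ t) (htk : t ≤ k) :
    (1 + t) ^ β ≤ 1 + ((1 + k) ^ β - 1) / k ^ β * t ^ β := by
  rcases hβ0.eq_or_lt with rfl | hβ
  · simp
  have hinv : 1 ≤ β⁻¹ := one_le_inv₀ hβ |>.2 hβ1
  have hl0 : 0 ≤ (t / k) ^ β := by positivity
  have hl1 : (t / k) ^ β ≤ 1 := rpow_le_one (by positivity) ((div_le_one hk).2 htk) hβ0
  have chord := one_add_mul_rpow_rpow_inv_le hinv (rpow_nonneg hk.le β) hl0 hl1
  rw [← mul_rpow (by positivity) hk.le, div_mul_cancel₀ t hk.ne', rpow_rpow_inv ht0 hβ.ne',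
    rpow_rpow_inv hk.le hβ.ne', inv_inv] at chord
  calc (1 + t) ^ β ≤ 1 - (t / k) ^ β + (t / k) ^ β * (1 + k) ^ β := chord
    _ = _ := by rw [div_rpow ht0 hk.le]; ring

lemma add_rpow_le_chord {k β x y : ℝ} (hk : 0 < k) (hβ0 : 0 ≤ β) (hβ1 : β ≤ 1)
    (hx : 0 ≤ x) (hy : 0 ≤ y) (hyx : y ≤ k * x) :
    (x + y) ^ β ≤ x ^ β + ((1 + k) ^ β - 1) / k ^ β * y ^ β := by
  rcases hx.eq_or_lt with rfl | hx
  · obtain rfl : y = 0 := by linarith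
    simpa using mul_nonneg (one_add_rpow_sub_one_div_rpow_nonneg hk.le hβ0) (rpow_nonneg le_rfl β)
  have chord := one_add_rpow_le_chord hk hβ0 hβ1 (div_nonneg hy hx.le)
    ((div_le_iff₀ hx).2 (by linarith))
  calc (x + y) ^ β = x ^ β * (1 + y / x) ^ β := by
        rw [← mul_rpow hx.le (by positivity), mul_one_add, mul_div_cancel₀ y hx.ne']
    _ ≤ x ^ β * (1 + ((1 + k) ^ β - 1) / k ^ β * (y / x) ^ β) := by gcongr
    _ = x ^ β + ((1 + k) ^ β - 1) / k ^ β * y ^ β := by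
        rw [div_rpow hy hx.le]; field_simp

lemma rpow_sum_Icc_le_sum_pow_mul_rpow {k β : ℝ} (hk : 0 < k) (hβ0 : 0 ≤ β) (hβ1 : β ≤ 1)
    {a : ℕ → ℝ} {i n : ℕ} (hin : i ≤ n) (ha : ∀ j ∈ Icc i n, 0 ≤ a j)
    (hdom : ∀ j ∈ Ico i n, ∑ l ∈ Icc (j + 1) n, a l ≤ k * a j) :
    (∑ j ∈ Icc i n, a j) ^ β ≤
      ∑ j ∈ Icc i n, (((1 + k) ^ β - 1) / k ^ β) ^ (j - i) * a j ^ β := by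
  set h := ((1 + k) ^ β - 1) / k ^ β
  induction hin using Nat.decreasingInduction with
  | self => simp
  | of_succ i hi ih =>
    have hsplit (f : ℕ → ℝ) : ∑ j ∈ Icc i n, f j = f i + ∑ j ∈ Icc (i + 1) n, f j := by
      rw [← insert_Icc_add_one_left_eq_Icc hi.le, sum_insert (by simp)]
    have hS : 0 ≤ ∑ j ∈ Icc (i + 1) n, a j :=
      sum_nonneg fun j hj => ha j (Icc_subset_Icc_left i.le_succ hj)
    have ih := ih (fun j hj => ha j (Icc_subset_Icc_left i.le_succ hj))
      (fun j hj => hdom j (Ico_subset_Ico_left i.le_succ hj))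
    calc (∑ j ∈ Icc i n, a j) ^ β
        ≤ a i ^ β + h * (∑ j ∈ Icc (i + 1) n, a j) ^ β := by
          rw [hsplit]
          exact add_rpow_le_chord hk hβ0 hβ1 (ha i (by simp [hi.le])) hS
            (hdom i (by simp [hi]))
      _ ≤ a i ^ β + h * ∑ j ∈ Icc (i + 1) n, h ^ (j - (i + 1)) * a j ^ β := by
          gcongr
          exact one_add_rpow_sub_one_div_rpow_nonneg hk.le hβ0
      _ = ∑ j ∈ Icc i n, h ^ (j - i) * a j ^ β := by
          rw [hsplit, mul_sum, Nat.sub_self, pow_zero, one_mul]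
          congr 1
          refine sum_congr rfl fun j hj => ?_
          rw [← mul_assoc, ← pow_succ']
          congr 2
          grind

theorem stmt_11_general (k β : ℝ) (hk0 : 0 < k) (hβ0 : 0 ≤ β) (hβ1 : β ≤ 1)
    (N : ℕ) (hN : 2 ≤ N) (e : ℝ) (a : ℕ → ℝ)
    (he : 0 ≤ e) (ha : ∀ i ∈ Finset.Icc 1 (N - 1), 0 ≤ a i)
    (hpoly : e ≤ ∑ i ∈ Finset.Icc 1 (N - 1), a i)
    (hcond : ∀ i ∈ Finset.Icc 1 (N - 2),
      k * a i ≥ ∑ j ∈ Finset.Icc (i + 1) (N - 1), a j) :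
    e ^ β ≤ ∑ i ∈ Finset.Icc 1 (N - 1),
      (((1 + k) ^ β - 1) / k ^ β) ^ (i - 1) * (a i) ^ β := by
  have hdom : ∀ i ∈ Ico 1 (N - 1), ∑ j ∈ Icc (i + 1) (N - 1), a j ≤ k * a i :=
    fun i hi => hcond i (by grind)
  calc e ^ β ≤ (∑ i ∈ Icc 1 (N - 1), a i) ^ β := rpow_le_rpow he hpoly hβ0
    _ ≤ _ := rpow_sum_Icc_le_sum_pow_mul_rpow hk0 hβ0 hβ1 (by omega) ha hdom

theorem stmt_11 (k β : ℝ) (hk0 : 0 < k) (hk1 : k ≤ 1) (hβ0 : 0 ≤ β) (hβ1 : β ≤ 1)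
    (N : ℕ) (hN : 2 ≤ N) (e : ℝ) (a : ℕ → ℝ)
    (he : 0 ≤ e) (ha : ∀ i ∈ Finset.Icc 1 (N - 1), 0 ≤ a i)
    (hpoly : e ≤ ∑ i ∈ Finset.Icc 1 (N - 1), a i)
    (hcond : ∀ i ∈ Finset.Icc 1 (N - 2),
      k * a i ≥ ∑ j ∈ Finset.Icc (i + 1) (N - 1), a j) :
    e ^ β ≤ ∑ i ∈ Finset.Icc 1 (N - 1),
      (((1 + k) ^ β - 1) / k ^ β) ^ (i - 1) * (a i) ^ β :=
  stmt_11_general k β hk0 hβ0 hβ1 N hN e a he ha hpoly hcond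
end

section
/- Let 0 < k ≤ 1 and 0 ≤ β ≤ 1 be real numbers, and let a, b, c ≥ 0 satisfy c ≤ a + b and b ≤ k·a. Then c^β ≤ a^β + ((1+k)^β - 1)/k^β · b^β. -/
/-!
Put `p = 1/β ≥ 1`, so that `(a + b)^β` is the `ℓ^p` norm of `(a^β, b^β)`. Since `b/k ≤ a`, this
vector splits as `(a^β - (b/k)^β, 0) + ((b/k)^β, b^β)` with nonnegative entries, and Minkowski's
inequality bounds its norm by `a^β - (b/k)^β + (b/k + b)^β`, which is the right-hand side because
`(b/k + b)^β = (1 + k)^β (b/k)^β`.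
-/

open Real

theorem Real.Lp_add_le_of_nonneg_pair {p : ℝ} (hp : 1 ≤ p) {x₁ y₁ x₂ y₂ : ℝ}
    (hx₁ : 0 ≤ x₁) (hy₁ : 0 ≤ y₁) (hx₂ : 0 ≤ x₂) (hy₂ : 0 ≤ y₂) :
    ((x₁ + x₂) ^ p + (y₁ + y₂) ^ p) ^ (1 / p) ≤
      (x₁ ^ p + y₁ ^ p) ^ (1 / p) + (x₂ ^ p + y₂ ^ p) ^ (1 / p) := by
  have h := Real.Lp_add_le_of_nonneg (f := ![x₁, y₁]) (g := ![x₂, y₂]) Finset.univ hp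
    (by intro i _; fin_cases i <;> assumption) (by intro i _; fin_cases i <;> assumption)
  simpa [Fin.sum_univ_two] using h

theorem Real.add_rpow_le_rpow_add_mul_rpow {k β a b : ℝ} (hk : 0 < k) (hβ₀ : 0 < β) (hβ₁ : β ≤ 1)
    (hb : 0 ≤ b) (hba : b ≤ k * a) :
    (a + b) ^ β ≤ a ^ β + ((1 + k) ^ β - 1) / k ^ β * b ^ β := by
  have hbk : b / k ≤ a := by rwa [div_le_iff₀ hk, mul_comm]
  have ha : 0 ≤ a := (div_nonneg hb hk.le).trans hbk
  have hs : (b / k) ^ β ≤ a ^ β := rpow_le_rpow (div_nonneg hb hk.le) hbk hβ₀.le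
  have hp : 1 ≤ β⁻¹ := one_le_inv₀ hβ₀ |>.mpr hβ₁
  have hβp : 1 / β⁻¹ = β := by rw [one_div, inv_inv]
  have key := Lp_add_le_of_nonneg_pair hp (sub_nonneg.mpr hs) le_rfl
    (rpow_nonneg (div_nonneg hb hk.le) β) (rpow_nonneg hb β)
  rw [hβp, sub_add_cancel, zero_add, zero_rpow (inv_ne_zero hβ₀.ne'), add_zero,
    rpow_rpow_inv ha hβ₀.ne', rpow_rpow_inv hb hβ₀.ne', ← rpow_mul (sub_nonneg.mpr hs),
    inv_mul_cancel₀ hβ₀.ne', rpow_one, rpow_rpow_inv (div_nonneg hb hk.le) hβ₀.ne'] at key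
  have hv : (b / k + b) ^ β = (1 + k) ^ β / k ^ β * b ^ β := by
    rw [show b / k + b = (1 + k) / k * b by field_simp,
      mul_rpow (by positivity) hb, div_rpow (by positivity) hk.le]
  have hs' : (b / k) ^ β = b ^ β / k ^ β := div_rpow hb hk.le β
  calc (a + b) ^ β ≤ a ^ β - (b / k) ^ β + (b / k + b) ^ β := key
    _ = a ^ β + ((1 + k) ^ β - 1) / k ^ β * b ^ β := by rw [hv, hs']; ring

theorem stmt_14_general (k β a b c : ℝ) (hk0 : 0 < k) (hβ0 : 0 ≤ β) (hβ1 : β ≤ 1)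
    (hb : 0 ≤ b) (hc : 0 ≤ c)
    (hpoly : c ≤ a + b) (hcond : b ≤ k * a) :
    c ^ β ≤ a ^ β + ((1 + k) ^ β - 1) / k ^ β * b ^ β := by
  rcases hβ0.eq_or_lt with rfl | hβ
  · simp
  exact (rpow_le_rpow hc hpoly hβ.le).trans (add_rpow_le_rpow_add_mul_rpow hk0 hβ hβ1 hb hcond)

theorem stmt_14 (k β a b c : ℝ) (hk0 : 0 < k) (hk1 : k ≤ 1) (hβ0 : 0 ≤ β) (hβ1 : β ≤ 1)
    (ha : 0 ≤ a) (hb : 0 ≤ b) (hc : 0 ≤ c)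
    (hpoly : c ≤ a + b) (hcond : b ≤ k * a) :
    c ^ β ≤ a ^ β + ((1 + k) ^ β - 1) / k ^ β * b ^ β :=
  stmt_14_general k β a b c hk0 hβ0 hβ1 hb hc hpoly hcond
end

section
/- Let 0 < k ≤ 1, β ≥ 1, and integers N ≥ 4, 1 ≤ m ≤ N-3. Let T, T₁,…,T_{N-1} ≥ 0 satisfy T ≥ T₁ + ⋯ + T_{N-1} and, setting S_i = T_{i+1} + ⋯ + T_{N-1}, assume k·T_i ≥ S_i for i = 1,…,m and T_j ≤ k·S_j for j = m+1,…,N-2. Then with h = ((1+k)^β - 1)/k^β: T^β ≥ T₁^β + h·T₂^β + ⋯ + h^{m-1}·T_m^β + h^{m+1}·(T_{m+1}^β + ⋯ + T_{N-2}^β) + h^m·T_{N-1}^β. -/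
/-! Since `t ↦ t ^ β` is convex, its increments grow: comparing the increment by `y` at
`y / k ≤ x` with the one at `x` gives `x ^ β + h y ^ β ≤ (x + y) ^ β` whenever `0 ≤ y ≤ k x`.
Write `S_i = T_i + S_{i+1}` for the tail sums, `S_1 ≤ T`. For `i ≤ m` apply this with
`x = T_i`, `y = S_{i+1}`, which peels off `T_i ^ β` and costs a factor `h` on what remains;
for `m < j ≤ N - 2` apply it with `x = S_{j+1}`, `y = T_j`, which peels off `h T_j ^ β`. -/

open Finset

theorem ConvexOn.sub_le_sub_of_le {𝕜 : Type*} [Field 𝕜] [LinearOrder 𝕜] [IsStrictOrderedRing 𝕜]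
    {s : Set 𝕜} {f : 𝕜 → 𝕜} (hf : ConvexOn 𝕜 s f) {x y d : 𝕜} (hx : x ∈ s) (hyd : y + d ∈ s)
    (hxy : x ≤ y) (hd : 0 ≤ d) : f (x + d) - f x ≤ f (y + d) - f y := by
  rcases hd.eq_or_lt with rfl | hd
  · simp
  rcases hxy.eq_or_lt with rfl | hxy
  · rfl
  have mem : ∀ z, x ≤ z → z ≤ y + d → z ∈ s := fun z h₁ h₂ ↦
    hf.1.ordConnected.out hx hyd ⟨h₁, h₂⟩
  -- slope over `[x, x + d]` ≤ slope over `[x, y + d]` ≤ slope over `[y, y + d]`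
  have h₁ := hf.secant_mono hx (mem (x + d) (by linarith) (by linarith)) hyd
    (by linarith) (by linarith) (by linarith : x + d ≤ y + d)
  have h₂ := hf.secant_mono hyd hx (mem y hxy.le (by linarith)) (by linarith) (by linarith) hxy.le
  rw [← neg_sub (f (y + d)), ← neg_sub (y + d) x, neg_div_neg_eq, ← neg_sub (f (y + d)),
    ← neg_sub (y + d) y, neg_div_neg_eq, add_sub_cancel_left] at h₂
  rw [add_sub_cancel_left] at h₁
  exact (div_le_div_iff_of_pos_right hd).1 (h₁.trans h₂)

noncomputable def monogamyFactor (k β : ℝ) : ℝ := ((1 + k) ^ β - 1) / k ^ β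

theorem monogamyFactor_nonneg {k β : ℝ} (hk : 0 ≤ k) (hβ : 0 ≤ β) : 0 ≤ monogamyFactor k β :=
  div_nonneg (sub_nonneg.2 (Real.one_le_rpow (by linarith) hβ)) (Real.rpow_nonneg hk β)

theorem rpow_add_monogamyFactor_mul_rpow_le {k β x y : ℝ} (hk : 0 < k) (hβ : 1 ≤ β)
    (hy : 0 ≤ y) (hyx : y ≤ k * x) : x ^ β + monogamyFactor k β * y ^ β ≤ (x + y) ^ β := by
  have hu : 0 ≤ y / k := div_nonneg hy hk.le
  have hux : y / k ≤ x := (div_le_iff₀' hk).2 hyx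
  have incr := (convexOn_rpow hβ).sub_le_sub_of_le hu
    (Set.mem_Ici.2 (add_nonneg (hu.trans hux) hy)) hux hy
  have hlhs : (y / k + y) ^ β - (y / k) ^ β = monogamyFactor k β * y ^ β := by
    rw [show y / k + y = y / k * (1 + k) by field_simp, Real.mul_rpow hu (by linarith),
      Real.div_rpow hy hk.le, monogamyFactor]
    ring
  linarith

section Chains

variable {k β : ℝ} {a S : ℕ → ℝ} {p q : ℕ}

theorem sum_pow_mul_rpow_add_le_of_head_dominant (hk : 0 < k) (hβ : 1 ≤ β) (hpq : p ≤ q)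
    (hS : ∀ i ∈ Ico p q, S i = a i + S (i + 1)) (hS₀ : ∀ i ∈ Ico p q, 0 ≤ S (i + 1))
    (hdom : ∀ i ∈ Ico p q, S (i + 1) ≤ k * a i) :
    ∑ i ∈ Ico p q, monogamyFactor k β ^ (i - p) * a i ^ β
      + monogamyFactor k β ^ (q - p) * S q ^ β ≤ S p ^ β := by
  induction q, hpq using Nat.le_induction with
  | base => simp
  | succ q hpq ih =>
    have hq : q ∈ Ico p (q + 1) := mem_Ico.2 ⟨hpq, q.lt_succ_self⟩
    have hsub : Ico p q ⊆ Ico p (q + 1) := Ico_subset_Ico_right q.le_succ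
    have step : a q ^ β + monogamyFactor k β * S (q + 1) ^ β ≤ S q ^ β := by
      rw [hS q hq]
      exact rpow_add_monogamyFactor_mul_rpow_le hk hβ (hS₀ q hq) (hdom q hq)
    have hpow : 0 ≤ monogamyFactor k β ^ (q - p) :=
      pow_nonneg (monogamyFactor_nonneg hk.le (by linarith)) _
    have := ih (fun i hi ↦ hS i (hsub hi)) (fun i hi ↦ hS₀ i (hsub hi))
      (fun i hi ↦ hdom i (hsub hi))
    rw [sum_Ico_succ_top hpq, Nat.sub_add_comm hpq, pow_succ]
    linarith [mul_le_mul_of_nonneg_left step hpow]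

theorem mul_sum_rpow_add_le_of_tail_dominant (hk : 0 < k) (hβ : 1 ≤ β) (hpq : p ≤ q)
    (hS : ∀ i ∈ Ico p q, S i = a i + S (i + 1)) (ha : ∀ i ∈ Ico p q, 0 ≤ a i)
    (hdom : ∀ i ∈ Ico p q, a i ≤ k * S (i + 1)) :
    monogamyFactor k β * ∑ i ∈ Ico p q, a i ^ β + S q ^ β ≤ S p ^ β := by
  induction q, hpq using Nat.le_induction with
  | base => simp
  | succ q hpq ih =>
    have hq : q ∈ Ico p (q + 1) := mem_Ico.2 ⟨hpq, q.lt_succ_self⟩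
    have hsub : Ico p q ⊆ Ico p (q + 1) := Ico_subset_Ico_right q.le_succ
    have step : S (q + 1) ^ β + monogamyFactor k β * a q ^ β ≤ S q ^ β := by
      rw [hS q hq, add_comm (a q)]
      exact rpow_add_monogamyFactor_mul_rpow_le hk hβ (ha q hq) (hdom q hq)
    have := ih (fun i hi ↦ hS i (hsub hi)) (fun i hi ↦ ha i (hsub hi))
      (fun i hi ↦ hdom i (hsub hi))
    rw [sum_Ico_succ_top hpq, mul_add]
    linarith

end Chains

theorem stmt_15_general (k β : ℝ) (hk0 : 0 < k) (hβ : 1 ≤ β)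
    (N m : ℕ) (hN : 4 ≤ N) (hm2 : m ≤ N - 3)
    (T : ℝ) (a : ℕ → ℝ)
    (ha : ∀ i ∈ Finset.Icc 1 (N - 1), 0 ≤ a i)
    (hmono : T ≥ ∑ i ∈ Finset.Icc 1 (N - 1), a i)
    (hcond1 : ∀ i ∈ Finset.Icc 1 m,
      k * a i ≥ ∑ j ∈ Finset.Icc (i + 1) (N - 1), a j)
    (hcond2 : ∀ j ∈ Finset.Icc (m + 1) (N - 2),
      a j ≤ k * ∑ l ∈ Finset.Icc (j + 1) (N - 1), a l) :
    T ^ β ≥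
      (∑ i ∈ Finset.Icc 1 m, (((1 + k) ^ β - 1) / k ^ β) ^ (i - 1) * (a i) ^ β)
      + (((1 + k) ^ β - 1) / k ^ β) ^ (m + 1) *
          (∑ j ∈ Finset.Icc (m + 1) (N - 2), (a j) ^ β)
      + (((1 + k) ^ β - 1) / k ^ β) ^ m * (a (N - 1)) ^ β := by
  set S : ℕ → ℝ := fun i ↦ ∑ j ∈ Icc i (N - 1), a j with hS_def
  have hS₀ : ∀ i, 1 ≤ i → 0 ≤ S i := fun i hi ↦
    sum_nonneg fun j hj ↦ ha j (Icc_subset_Icc_left hi hj)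
  have hS : ∀ i, i ≤ N - 1 → S i = a i + S (i + 1) := fun i hi ↦ by
    simp only [hS_def]
    rw [← insert_Icc_add_one_left_eq_Icc hi, sum_insert (by simp)]
  have head := sum_pow_mul_rpow_add_le_of_head_dominant (β := β) (p := 1) (q := m + 1) hk0 hβ
    (by omega) (fun i hi ↦ hS i (by simp at hi; omega)) (fun i _ ↦ hS₀ (i + 1) (by omega))
    (fun i hi ↦ hcond1 i (by simpa [Ico_add_one_right_eq_Icc] using hi))
  have tail := mul_sum_rpow_add_le_of_tail_dominant (β := β) (p := m + 1) (q := N - 2 + 1) hk0 hβ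
    (by omega) (fun i hi ↦ hS i (by simp at hi; omega)) (fun i hi ↦ ha i (by simp at hi ⊢; omega))
    (fun i hi ↦ hcond2 i (by simpa [Ico_add_one_right_eq_Icc] using hi))
  have hlast : S (N - 2 + 1) = a (N - 1) := by
    rw [show N - 2 + 1 = N - 1 by omega]
    simp [hS_def]
  rw [Ico_add_one_right_eq_Icc, Nat.add_sub_cancel] at head
  rw [Ico_add_one_right_eq_Icc, hlast] at tail
  have hpow : 0 ≤ monogamyFactor k β ^ m :=
    pow_nonneg (monogamyFactor_nonneg hk0.le (by linarith)) _
  calc _ = ∑ i ∈ Icc 1 m, monogamyFactor k β ^ (i - 1) * a i ^ β + monogamyFactor k β ^ m *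
          (monogamyFactor k β * ∑ i ∈ Icc (m + 1) (N - 2), a i ^ β + a (N - 1) ^ β) := by
        rw [monogamyFactor]; ring
    _ ≤ ∑ i ∈ Icc 1 m, monogamyFactor k β ^ (i - 1) * a i ^ β
          + monogamyFactor k β ^ m * S (m + 1) ^ β :=
        add_le_add_right (mul_le_mul_of_nonneg_left tail hpow) _
    _ ≤ S 1 ^ β := head
    _ ≤ T ^ β := Real.rpow_le_rpow (hS₀ 1 le_rfl) hmono (by linarith)

theorem stmt_15 (k β : ℝ) (hk0 : 0 < k) (hk1 : k ≤ 1) (hβ : 1 ≤ β)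
    (N m : ℕ) (hN : 4 ≤ N) (hm1 : 1 ≤ m) (hm2 : m ≤ N - 3)
    (T : ℝ) (a : ℕ → ℝ)
    (hT : 0 ≤ T) (ha : ∀ i ∈ Finset.Icc 1 (N - 1), 0 ≤ a i)
    (hmono : T ≥ ∑ i ∈ Finset.Icc 1 (N - 1), a i)
    (hcond1 : ∀ i ∈ Finset.Icc 1 m,
      k * a i ≥ ∑ j ∈ Finset.Icc (i + 1) (N - 1), a j)
    (hcond2 : ∀ j ∈ Finset.Icc (m + 1) (N - 2),
      a j ≤ k * ∑ l ∈ Finset.Icc (j + 1) (N - 1), a l) :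
    T ^ β ≥
      (∑ i ∈ Finset.Icc 1 m, (((1 + k) ^ β - 1) / k ^ β) ^ (i - 1) * (a i) ^ β)
      + (((1 + k) ^ β - 1) / k ^ β) ^ (m + 1) *
          (∑ j ∈ Finset.Icc (m + 1) (N - 2), (a j) ^ β)
      + (((1 + k) ^ β - 1) / k ^ β) ^ m * (a (N - 1)) ^ β :=
  stmt_15_general k β hk0 hβ N m hN hm2 T a ha hmono hcond1 hcond2
end
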